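/- Let g: ℕ → ℕ be nondecreasing with g(n)/n → 0, and let X be the bounded density shift over {0,1} consisting of all bi-infinite sequences whose every length-n subword has at most g(n) ones. Then the only shift-invariant Borel probability measure on X is the point mass at the all-zeros sequence, and consequently the topological entropy of X is 0. -/

import Mathlib

/-!
If `μ` is shift-invariant, `p = μ {x | x 0 = 1}` is also the probability of a `1` at every other
coordinate, so integrating the number of `1`s in a window of length `n` gives `n * p ≤ g n`;
as `g n / n → 0`, `p = 0`, and `μ`-almost every point is all zeros.

A word of length `n` in the language of the shift has at most `m = g n` ones, so with `t = m / n`,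
`|L_n| ≤ ∑_{k ≤ m} C(n, k) ≤ (1 + t)^n / t^m`, whence `log |L_n| / n ≤ t - t log t → 0`.
-/

open Real Filter MeasureTheory

/-- The left shift map on bi-infinite sequences. -/
def shiftMap {A : Type*} (x : ℤ → A) : ℤ → A := fun i => x (i + 1)

/-- The word of length `n` read from `x` starting at position `i`. -/
def wordAt {A : Type*} (x : ℤ → A) (i : ℤ) (n : ℕ) : List A :=
  List.ofFn (fun k : Fin n => x (i + (k : ℕ)))

/-- A word `w` belongs to the language of a set `S` of bi-infinite sequences if it
occurs somewhere in some point of `S`. -/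
def InLangS {A : Type*} (S : Set (ℤ → A)) (w : List A) : Prop :=
  ∃ x ∈ S, ∃ i : ℤ, wordAt x i w.length = w

/-- Hamming distance between two words of the same length: the number of
positions at which they differ. -/
def listHamming {A : Type*} [DecidableEq A] (v w : List A) : ℕ :=
  (List.zipWith (fun a b => if a = b then 0 else 1) v w).sum

/-- A subshift: a closed, shift-invariant set of bi-infinite sequences over a
finite (discrete) alphabet. -/
structure Subshift (A : Type*) [TopologicalSpace A] where
  carrier : Set (ℤ → A)
  isClosed : IsClosed carrier
  invariant : ∀ x ∈ carrier, shiftMap x ∈ carrier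

/-- Topological entropy of (the language of) `S`, as the infimum of
`(1/n) log |L_n(S)|` (equal to the limit by subadditivity). -/
noncomputable def langEntropy {A : Type*} (S : Set (ℤ → A)) : ℝ :=
  ⨅ n : ℕ+, Real.log ({w : List A | w.length = (n : ℕ) ∧ InLangS S w}.ncard) / (n : ℝ)

/-- The bounded density shift over `{0,1}` (here `Bool`, with `true` playing the
role of the symbol 1). -/
def bdsCarrier (g : ℕ → ℕ) : Set (ℤ → Bool) :=
  {x : ℤ → Bool | ∀ (i : ℤ) (n : ℕ), (wordAt x i n).count true ≤ g n}


open Finset Topology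
open scoped ENNReal

@[simp]
lemma length_wordAt {A : Type*} (x : ℤ → A) (i : ℤ) (n : ℕ) : (wordAt x i n).length = n :=
  List.length_ofFn

lemma List.count_true_ofFn {n : ℕ} (f : Fin n → Bool) :
    (List.ofFn f).count true = #{i | f i = true} := by
  simpa using (Fin.card_filter_univ_eq_vector_get_eq_count true (List.Vector.ofFn f)).symm

lemma card_filter_card_le_sum_choose (n m : ℕ) :
    #{s : Finset (Fin n) | #s ≤ m} ≤ ∑ k ∈ range (m + 1), n.choose k := by
  classical
  calc #{s : Finset (Fin n) | #s ≤ m}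
      ≤ #((range (m + 1)).biUnion fun k => powersetCard k univ) :=
        card_le_card fun s hs => by
          simp only [mem_filter, mem_univ, true_and] at hs
          simpa [mem_powersetCard, Nat.lt_succ_iff] using hs
    _ ≤ ∑ k ∈ range (m + 1), #(powersetCard k (univ : Finset (Fin n))) := card_biUnion_le
    _ = ∑ k ∈ range (m + 1), n.choose k := by simp [card_powersetCard]

lemma ncard_count_true_le_sum_choose (n m : ℕ) :
    {w : List Bool | w.length = n ∧ w.count true ≤ m}.ncard
      ≤ ∑ k ∈ range (m + 1), n.choose k := by
  classical
  let toWord : Finset (Fin n) → List Bool := fun s => List.ofFn fun i => decide (i ∈ s)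
  have hsub : {w : List Bool | w.length = n ∧ w.count true ≤ m}
      ⊆ toWord '' {s | #s ≤ m} := by
    rintro w ⟨rfl, hw⟩
    refine ⟨({i : Fin w.length | w[i] = true} : Finset _), ?_, ?_⟩
    · simpa [← List.count_true_ofFn, List.ofFn_getElem] using hw
    · simp [toWord]
  calc _ ≤ (toWord '' {s | #s ≤ m}).ncard := Set.ncard_le_ncard hsub (Set.toFinite _)
    _ ≤ ({s | #s ≤ m} : Set (Finset (Fin n))).ncard := Set.ncard_image_le (Set.toFinite _)
    _ = #{s : Finset (Fin n) | #s ≤ m} := by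
        rw [← Set.ncard_coe_finset]; simp
    _ ≤ _ := card_filter_card_le_sum_choose n m

lemma sum_choose_mul_pow_le {n m : ℕ} (hmn : m ≤ n) {t : ℝ} (ht0 : 0 ≤ t) (ht1 : t ≤ 1) :
    (∑ k ∈ range (m + 1), (n.choose k : ℝ)) * t ^ m ≤ (1 + t) ^ n := by
  calc (∑ k ∈ range (m + 1), (n.choose k : ℝ)) * t ^ m
      = ∑ k ∈ range (m + 1), (n.choose k : ℝ) * t ^ m := sum_mul ..
    _ ≤ ∑ k ∈ range (m + 1), (n.choose k : ℝ) * t ^ k := by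
        refine sum_le_sum fun k hk => mul_le_mul_of_nonneg_left ?_ (by positivity)
        exact pow_le_pow_of_le_one ht0 ht1 (Nat.lt_succ_iff.mp (mem_range.mp hk))
    _ ≤ ∑ k ∈ range (n + 1), (n.choose k : ℝ) * t ^ k :=
        sum_le_sum_of_subset_of_nonneg (range_subset_range.mpr (by omega))
          fun _ _ _ => by positivity
    _ = (1 + t) ^ n := by
        rw [add_comm 1 t, add_pow]
        exact sum_congr rfl fun k _ => by ring

lemma log_sum_choose_le {n m : ℕ} (hn : 0 < n) (hmn : m ≤ n) :
    Real.log (∑ k ∈ range (m + 1), (n.choose k : ℝ)) ≤ n * (m / n + negMulLog (m / n)) := by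
  rcases Nat.eq_zero_or_pos m with rfl | hm
  · simp
  set t : ℝ := m / n
  have hnR : (0 : ℝ) < n := by exact_mod_cast hn
  have ht0 : 0 < t := by positivity
  have ht1 : t ≤ 1 := div_le_one_of_le₀ (by exact_mod_cast hmn) hnR.le
  have hnt : n * t = m := mul_div_cancel₀ _ hnR.ne'
  have hB : 0 < ∑ k ∈ range (m + 1), (n.choose k : ℝ) :=
    sum_pos' (fun _ _ => by positivity) ⟨0, by simp⟩
  have key := Real.log_le_log (by positivity) (sum_choose_mul_pow_le hmn ht0.le ht1)
  rw [Real.log_mul hB.ne' (by positivity), Real.log_pow, Real.log_pow] at key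
  have hlog : Real.log (1 + t) ≤ t := by
    linarith [Real.log_le_sub_one_of_pos (by positivity : (0 : ℝ) < 1 + t)]
  calc Real.log (∑ k ∈ range (m + 1), (n.choose k : ℝ))
      ≤ n * Real.log (1 + t) - m * Real.log t := by linarith
    _ ≤ n * t - m * Real.log t := by gcongr
    _ = n * (t + negMulLog t) := by rw [negMulLog, ← hnt]; ring

section Language

variable {A : Type*}

noncomputable def langCard (S : Set (ℤ → A)) (n : ℕ) : ℕ :=
  {w : List A | w.length = n ∧ InLangS S w}.ncard

lemma one_le_langCard [Finite A] {S : Set (ℤ → A)} (hS : S.Nonempty) (n : ℕ) :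
    1 ≤ langCard S n := by
  obtain ⟨x, hx⟩ := hS
  refine (Set.ncard_pos ((List.finite_length_eq A n).subset fun w hw => hw.1)).mpr ?_
  exact ⟨wordAt x 0 n, length_wordAt x 0 n, x, hx, 0, by rw [length_wordAt]⟩

lemma log_langCard_div_nonneg [Finite A] {S : Set (ℤ → A)} (hS : S.Nonempty) (n : ℕ) :
    0 ≤ Real.log (langCard S n) / n :=
  div_nonneg (Real.log_nonneg (by exact_mod_cast one_le_langCard hS n)) n.cast_nonneg

lemma langEntropy_eq_zero [Finite A] {S : Set (ℤ → A)} (hS : S.Nonempty)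
    (h : Tendsto (fun n : ℕ => Real.log (langCard S n) / n) atTop (𝓝 0)) :
    langEntropy S = 0 := by
  have hbdd : BddBelow (Set.range fun n : ℕ+ => Real.log (langCard S n) / (n : ℕ)) :=
    ⟨0, by rintro _ ⟨n, rfl⟩; exact log_langCard_div_nonneg hS n⟩
  refine le_antisymm (ge_of_tendsto h ?_) (le_ciInf fun n => log_langCard_div_nonneg hS n)
  filter_upwards [eventually_ge_atTop 1] with n hn
  exact ciInf_le hbdd ⟨n, hn⟩

end Language

lemma bdsCarrier_nonempty (g : ℕ → ℕ) : (bdsCarrier g).Nonempty :=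
  ⟨fun _ => false, fun i n => by simp [wordAt, List.ofFn_const, List.count_replicate]⟩

lemma langCard_bdsCarrier_le (g : ℕ → ℕ) (n : ℕ) :
    langCard (bdsCarrier g) n ≤ ∑ k ∈ range (g n + 1), n.choose k := by
  refine (Set.ncard_le_ncard ?_ ((List.finite_length_eq Bool n).subset fun w hw => hw.1)).trans
    (ncard_count_true_le_sum_choose n (g n))
  rintro w ⟨hw, x, hx, i, hxw⟩
  refine ⟨hw, ?_⟩
  rw [← hxw, hw]
  exact hx i n

lemma tendsto_log_langCard_bdsCarrier {g : ℕ → ℕ}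
    (hg : Tendsto (fun n : ℕ => (g n : ℝ) / n) atTop (𝓝 0)) :
    Tendsto (fun n : ℕ => Real.log (langCard (bdsCarrier g) n) / n) atTop (𝓝 0) := by
  have hupper :
      Tendsto (fun n : ℕ => (g n : ℝ) / n + negMulLog ((g n : ℝ) / n)) atTop (𝓝 0) := by
    simpa using hg.add ((continuous_negMulLog.tendsto 0).comp hg)
  refine tendsto_of_tendsto_of_tendsto_of_le_of_le' tendsto_const_nhds hupper
    (Eventually.of_forall (log_langCard_div_nonneg (bdsCarrier_nonempty g))) ?_
  filter_upwards [eventually_ge_atTop 1, hg.eventually (gt_mem_nhds one_pos)] with n hn hgn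
  have hnR : (0 : ℝ) < n := by exact_mod_cast hn
  have hgn_le : g n ≤ n := by exact_mod_cast ((div_lt_one hnR).mp hgn).le
  have hcard : Real.log (langCard (bdsCarrier g) n)
      ≤ Real.log (∑ k ∈ range (g n + 1), (n.choose k : ℝ)) :=
    Real.log_le_log (by exact_mod_cast one_le_langCard (bdsCarrier_nonempty g) n)
      (by exact_mod_cast langCard_bdsCarrier_le g n)
  rw [div_le_iff₀ hnR]
  linarith [log_sum_choose_le hn hgn_le]

lemma MeasureTheory.Measure.eq_dirac_of_ae_eq {α : Type*} [MeasurableSpace α] {μ : Measure α}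
    [IsProbabilityMeasure μ] {a : α} (h : ∀ᵐ x ∂μ, x = a) : μ = dirac a := by
  ext s hs
  rw [dirac_apply' a hs]
  by_cases ha : a ∈ s
  · rw [Set.indicator_of_mem ha]
    exact (mem_ae_iff_prob_eq_one hs).mp (h.mono fun x hx => hx ▸ ha)
  · rw [Set.indicator_of_notMem ha]
    exact measure_eq_zero_iff_ae_notMem.mpr (h.mono fun x hx => hx ▸ ha)

lemma ENNReal.eq_zero_of_natCast_mul_le {c : ℝ≥0∞} {g : ℕ → ℕ}
    (hg : Tendsto (fun n : ℕ => (g n : ℝ) / n) atTop (𝓝 0))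
    (h : ∀ n : ℕ, n * c ≤ g n) : c = 0 := by
  have hc : c ≠ ⊤ := ne_top_of_le_ne_top (natCast_ne_top (g 1)) (by simpa using h 1)
  have hle : c.toReal ≤ 0 := by
    refine ge_of_tendsto hg ?_
    filter_upwards [eventually_ge_atTop 1] with n hn
    rw [le_div_iff₀ (by exact_mod_cast hn), mul_comm]
    simpa [toReal_mul] using toReal_mono (natCast_ne_top _) (h n)
  exact (toReal_eq_zero_iff c).mp (le_antisymm hle toReal_nonneg) |>.resolve_right hc

lemma measurableSet_coord_eq {A : Type*} [MeasurableSpace A] [MeasurableSingletonClass A]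
    (k : ℤ) (a : A) : MeasurableSet {x : ℤ → A | x k = a} :=
  (measurable_pi_apply (X := fun _ : ℤ => A) k) (measurableSet_singleton a)

lemma measure_coord_eq_of_measurePreserving {A : Type*} [MeasurableSpace A]
    [MeasurableSingletonClass A] {μ : Measure (ℤ → A)} (hμ : MeasurePreserving shiftMap μ μ)
    (a : A) (k : ℤ) : μ {x | x k = a} = μ {x | x 0 = a} := by
  have hstep (k : ℤ) : μ {x | x (k + 1) = a} = μ {x | x k = a} :=
    hμ.measure_preimage (measurableSet_coord_eq k a).nullMeasurableSet
  induction k using Int.induction_on with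
  | zero => rfl
  | succ i ih => rw [hstep, ih]
  | pred i ih => rw [← ih, ← hstep, sub_add_cancel]

lemma measurableSet_bdsCarrier (g : ℕ → ℕ) : MeasurableSet (bdsCarrier g) := by
  simp only [bdsCarrier, Set.ofPred_forall]
  refine .iInter fun i => .iInter fun n => ?_
  have hword : Measurable fun x : ℤ → Bool => fun k : Fin n => x (i + k) :=
    measurable_pi_lambda _ fun k => measurable_pi_apply _
  exact hword
    (Set.to_countable {f : Fin n → Bool | (List.ofFn f).count true ≤ g n}).measurableSet

lemma lintegral_count_true_wordAt (μ : Measure (ℤ → Bool)) (i : ℤ) (n : ℕ) :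
    ∫⁻ x, ((wordAt x i n).count true : ℝ≥0∞) ∂μ
      = ∑ k : Fin n, μ {x | x (i + k) = true} := by
  have hcount (x : ℤ → Bool) : ((wordAt x i n).count true : ℝ≥0∞)
      = ∑ k : Fin n, {y : ℤ → Bool | y (i + k) = true}.indicator 1 x := by
    rw [wordAt, List.count_true_ofFn]
    simp [Set.indicator_apply]
  simp_rw [hcount]
  rw [lintegral_finsetSum _ fun k _ => measurable_one.indicator (measurableSet_coord_eq _ _)]
  exact sum_congr rfl fun k _ => lintegral_indicator_one (measurableSet_coord_eq _ _)

lemma natCast_mul_measure_coord_le {g : ℕ → ℕ} {μ : Measure (ℤ → Bool)}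
    [IsProbabilityMeasure μ]
    (hμ : MeasurePreserving shiftMap μ μ) (hae : ∀ᵐ x ∂μ, x ∈ bdsCarrier g) (n : ℕ) :
    n * μ {x | x 0 = true} ≤ g n :=
  calc n * μ {x | x 0 = true} = ∑ k : Fin n, μ {x | x (0 + k) = true} := by
        simp [measure_coord_eq_of_measurePreserving hμ]
    _ = ∫⁻ x, ((wordAt x 0 n).count true : ℝ≥0∞) ∂μ :=
        (lintegral_count_true_wordAt μ 0 n).symm
    _ ≤ ∫⁻ _, (g n : ℝ≥0∞) ∂μ :=
        lintegral_mono_ae (hae.mono fun x hx => by exact_mod_cast hx 0 n)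
    _ = g n := by simp

lemma eq_dirac_of_measurePreserving_of_bdsCarrier {g : ℕ → ℕ}
    (hg : Tendsto (fun n : ℕ => (g n : ℝ) / n) atTop (𝓝 0)) {μ : Measure (ℤ → Bool)}
    [IsProbabilityMeasure μ] (hμ : MeasurePreserving shiftMap μ μ)
    (hcar : μ (bdsCarrier g) = 1) :
    μ = Measure.dirac (fun _ : ℤ => false) := by
  have hae : ∀ᵐ x ∂μ, x ∈ bdsCarrier g :=
    (mem_ae_iff_prob_eq_one (measurableSet_bdsCarrier g)).mpr hcar
  have hzero : μ {x | x 0 = true} = 0 :=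
    ENNReal.eq_zero_of_natCast_mul_le hg (natCast_mul_measure_coord_le hμ hae)
  have hcoord : ∀ᵐ x ∂μ, ∀ k : ℤ, x k = false := ae_all_iff.mpr fun k => by
    simpa [ae_iff, measure_coord_eq_of_measurePreserving hμ] using hzero
  exact Measure.eq_dirac_of_ae_eq (hcoord.mono fun x hx => funext hx)

theorem stmt16_general (g : ℕ → ℕ)
    (hg : Filter.Tendsto (fun n : ℕ => (g n : ℝ) / (n : ℝ)) Filter.atTop (nhds 0)) :
    (∀ μ : MeasureTheory.Measure (ℤ → Bool), MeasureTheory.IsProbabilityMeasure μ →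
      MeasureTheory.MeasurePreserving shiftMap μ μ → μ (bdsCarrier g) = 1 →
      μ = MeasureTheory.Measure.dirac (fun _ : ℤ => false)) ∧
    langEntropy (bdsCarrier g) = 0 :=
  ⟨fun _ _ hμ hcar => eq_dirac_of_measurePreserving_of_bdsCarrier hg hμ hcar,
    langEntropy_eq_zero (bdsCarrier_nonempty g) (tendsto_log_langCard_bdsCarrier hg)⟩

/-- For `g` nondecreasing with `g(n)/n → 0`, the only shift-invariant Borel
probability measure on the bounded density shift is the point mass at the
all-zeros sequence, and the topological entropy of the shift is 0. -/
theorem stmt16 (g : ℕ → ℕ) (hmono : Monotone g)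
    (hg : Filter.Tendsto (fun n : ℕ => (g n : ℝ) / (n : ℝ)) Filter.atTop (nhds 0)) :
    (∀ μ : MeasureTheory.Measure (ℤ → Bool), MeasureTheory.IsProbabilityMeasure μ →
      MeasureTheory.MeasurePreserving shiftMap μ μ → μ (bdsCarrier g) = 1 →
      μ = MeasureTheory.Measure.dirac (fun _ : ℤ => false)) ∧
    langEntropy (bdsCarrier g) = 0 :=
  stmt16_general g hg
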